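/- Let x ∈ [0,1] be given by a Cantor series representation x = ∑_{k=1}^∞ ε_k/(q_1 q_2 ⋯ q_k). Then x is rational if and only if there exist coprime integers h and k with 0 ≤ h ≤ k, a positive integer N, and a strictly increasing sequence of integers 0 = m_0 < m_1 < m_2 < ⋯ (a condensation) such that, setting B_i = q_{m_{i−1}+1} q_{m_{i−1}+2} ⋯ q_{m_i} and A_i = ∑_{j=m_{i−1}+1}^{m_i} ε_j · (q_{j+1} q_{j+2} ⋯ q_{m_i}) (so that A_i/B_i = ∑_{j=m_{i−1}+1}^{m_i} ε_j/(q_{m_{i−1}+1} ⋯ q_j)), one has k · A_i = h · (B_i − 1) for all i ≥ N. -/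

import Mathlib

/-!
Write `ρ n` for the value of the shifted series `∑ₖ ε_{n+k} / (q_n ⋯ q_{n+k})`. These tails lie
in `[0, 1]` and satisfy `q_n ρ_n = ε_n + ρ_{n+1}`, hence `ρ_a B = A + ρ_b` across a block `[a, b)`
with numerator `A` and denominator `B`. If `x = ρ₀` is rational, each `ρ_n` is a multiple of
`1 / den x` in `[0, 1]`, so some value `h / k` is taken infinitely often; condensing along those
indices gives `(h / k) B_i = A_i + h / k`, i.e. `k A_i = h (B_i - 1)`. Conversely, that identity
makes `ρ_{m_i} - h / k` get multiplied by `B_i ≥ 2` at each step while staying bounded, so it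
vanishes, `ρ_{m_{N-1}} = h / k` is rational, and then so is `x`.
-/

open Finset

theorem exists_infinite_fiber_of_finite_range {α : Type*} {f : ℕ → α}
    (hf : (Set.range f).Finite) : ∃ y, {n | f n = y}.Infinite := by
  have := hf.to_subtype
  obtain ⟨⟨y, _⟩, hy⟩ := Finite.exists_infinite_fiber (Set.rangeFactorization f)
  refine ⟨y, ?_⟩
  convert Set.infinite_coe_iff.1 hy
  ext n
  simp [Set.rangeFactorization, Subtype.ext_iff]

theorem Set.Infinite.exists_strictMono_from_zero {S : Set ℕ} (hS : S.Infinite) :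
    ∃ m : ℕ → ℕ, m 0 = 0 ∧ StrictMono m ∧ ∀ i, 0 < i → m i ∈ S := by
  have hp : (Set.ofPred fun n => n = 0 ∨ n ∈ S).Infinite := hS.mono fun n hn => Or.inr hn
  have hm0 := Nat.nth_zero_of_zero (p := fun n => n = 0 ∨ n ∈ S) (Or.inl rfl)
  have hm := Nat.nth_strictMono hp
  exact ⟨_, hm0, hm, fun i hi => (Nat.nth_mem_of_infinite hp i).resolve_left (hm0 ▸ hm hi).ne'⟩

theorem eq_zero_of_abs_le_of_two_mul_abs_le {u : ℕ → ℝ} {C : ℝ} (hC : ∀ n, |u n| ≤ C)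
    (hu : ∀ n, 2 * |u n| ≤ |u (n + 1)|) : u 0 = 0 := by
  have hpow : ∀ n, 2 ^ n * |u 0| ≤ |u n| := by
    intro n
    induction n with
    | zero => simp
    | succ n ih => rw [pow_succ]; linarith [hu n]
  by_contra h0
  obtain ⟨n, hn⟩ := pow_unbounded_of_one_lt (C / |u 0|) one_lt_two
  rw [div_lt_iff₀ (abs_pos.2 h0)] at hn
  linarith [hpow n, hC n]

theorem Nat.Coprime.pos_right_of_le {h k : ℕ} (hcop : h.Coprime k) (hhk : h ≤ k) : 0 < k :=
  Nat.pos_of_ne_zero fun hk => by subst hk; simp at hcop; omega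

theorem Rat.exists_coprime_le_eq_div {c : ℚ} (h0 : 0 ≤ c) (h1 : c ≤ 1) :
    ∃ h k : ℕ, h.Coprime k ∧ h ≤ k ∧ c = h / k := by
  have hnum : (c.num.toNat : ℤ) = c.num := Int.toNat_of_nonneg (Rat.num_nonneg.2 h0)
  refine ⟨c.num.toNat, c.den, ?_, ?_, ?_⟩
  · have : c.num.toNat = c.num.natAbs := by omega
    exact this ▸ c.reduced
  · have := Rat.num_le_denom_iff.2 h1
    omega
  · conv_lhs => rw [← Rat.num_div_den c, ← hnum]
    rfl

theorem mul_eq_mul_sub_one_iff {h k A B : ℕ} (hk : 0 < k) (hB : 1 ≤ B) :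
    k * A = h * (B - 1) ↔ (h / k : ℝ) * B = A + h / k := by
  have hk' : (k : ℝ) ≠ 0 := by positivity
  rw [← Nat.cast_inj (R := ℝ)]
  push_cast [hB]
  field_simp
  constructor <;> intro H <;> linarith

namespace CantorSeries

noncomputable def value (q ε : ℕ → ℕ) : ℝ :=
  ∑' k, (ε k : ℝ) / ∏ i ∈ range (k + 1), (q i : ℝ)

noncomputable def tail (q ε : ℕ → ℕ) (n : ℕ) : ℝ :=
  value (fun i => q (n + i)) (fun i => ε (n + i))

/- For `a = m_{i-1}` and `b = m_i`, `blockDen` and `blockNum` are the paper's `B_i` and `A_i`: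
with 0-indexed sequences the block `{m_{i-1}+1, …, m_i}` becomes `[a, b)`. -/
def blockDen (q : ℕ → ℕ) (a b : ℕ) : ℕ := ∏ j ∈ Ico a b, q j

def blockNum (q ε : ℕ → ℕ) (a b : ℕ) : ℕ := ∑ j ∈ Ico a b, ε j * ∏ l ∈ Ico (j + 1) b, q l

def CondensationCriterion (q ε : ℕ → ℕ) : Prop :=
  ∃ h k : ℕ, Nat.Coprime h k ∧ h ≤ k ∧ ∃ N : ℕ, 0 < N ∧ ∃ m : ℕ → ℕ, m 0 = 0 ∧ StrictMono m ∧
    ∀ i ≥ N, k * blockNum q ε (m (i - 1)) (m i) = h * (blockDen q (m (i - 1)) (m i) - 1)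

variable {q ε : ℕ → ℕ}

section Value

variable (hε : ∀ k, ε k < q k)
include hε

theorem prod_range_pos (n : ℕ) : 0 < ∏ i ∈ range n, (q i : ℝ) :=
  prod_pos fun i _ => by exact_mod_cast (hε i).pos

theorem term_le_sub (k : ℕ) :
    (ε k : ℝ) / ∏ i ∈ range (k + 1), (q i : ℝ) ≤
      1 / ∏ i ∈ range k, (q i : ℝ) - 1 / ∏ i ∈ range (k + 1), (q i : ℝ) := by
  have hq : (ε k : ℝ) + 1 ≤ q k := by exact_mod_cast hε k
  have hq0 : (q k : ℝ) ≠ 0 := by exact_mod_cast (hε k).pos.ne'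
  have hP := prod_range_pos hε k
  have hsub : 1 / ∏ i ∈ range k, (q i : ℝ) - 1 / ((∏ i ∈ range k, (q i : ℝ)) * q k) =
      (q k - 1) / ((∏ i ∈ range k, (q i : ℝ)) * q k) := by
    field_simp
  rw [prod_range_succ, hsub]
  gcongr
  linarith

theorem sum_range_term_le_one (n : ℕ) :
    ∑ k ∈ range n, (ε k : ℝ) / ∏ i ∈ range (k + 1), (q i : ℝ) ≤ 1 :=
  calc ∑ k ∈ range n, (ε k : ℝ) / ∏ i ∈ range (k + 1), (q i : ℝ)
      ≤ ∑ k ∈ range n, (1 / ∏ i ∈ range k, (q i : ℝ) - 1 / ∏ i ∈ range (k + 1), (q i : ℝ)) :=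
        sum_le_sum fun k _ => term_le_sub hε k
    _ = 1 - 1 / ∏ i ∈ range n, (q i : ℝ) := by
        rw [sum_range_sub' (fun k => 1 / ∏ i ∈ range k, (q i : ℝ)), prod_range_zero, div_one]
    _ ≤ 1 := by linarith [one_div_pos.2 (prod_range_pos hε n)]

omit hε in
theorem term_nonneg (k : ℕ) : 0 ≤ (ε k : ℝ) / ∏ i ∈ range (k + 1), (q i : ℝ) := by
  positivity

theorem value_mem_Icc : value q ε ∈ Set.Icc 0 1 :=
  ⟨tsum_nonneg term_nonneg, Real.tsum_le_of_sum_range_le term_nonneg (sum_range_term_le_one hε)⟩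

theorem q_mul_value :
    (q 0 : ℝ) * value q ε = ε 0 + value (fun i => q (i + 1)) (fun i => ε (i + 1)) := by
  have hq0 : (q 0 : ℝ) ≠ 0 := by exact_mod_cast (hε 0).pos.ne'
  rw [value, (summable_of_sum_range_le term_nonneg (sum_range_term_le_one hε)).tsum_eq_zero_add,
    mul_add, value, ← tsum_mul_left]
  congr 1
  · simp [mul_div_cancel₀ _ hq0]
  · refine tsum_congr fun k => ?_
    rw [prod_range_succ' _ (k + 1)]
    field_simp

omit hε in
theorem tail_zero : tail q ε 0 = value q ε := by
  simp only [tail, zero_add]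

theorem tail_mem_Icc (n : ℕ) : tail q ε n ∈ Set.Icc 0 1 :=
  value_mem_Icc fun k => hε (n + k)

theorem q_mul_tail (n : ℕ) : (q n : ℝ) * tail q ε n = ε n + tail q ε (n + 1) := by
  have := q_mul_value (q := fun i => q (n + i)) (ε := fun i => ε (n + i)) fun k => hε (n + k)
  simp only [add_zero, ← add_assoc] at this
  simpa only [tail, add_right_comm n 1] using this

end Value

section Blocks

variable {a b : ℕ}

theorem blockDen_succ (hab : a ≤ b) : blockDen q a (b + 1) = blockDen q a b * q b :=
  prod_Ico_succ_top hab q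

theorem blockNum_succ (hab : a ≤ b) :
    blockNum q ε a (b + 1) = blockNum q ε a b * q b + ε b := by
  rw [blockNum, sum_Ico_succ_top hab, blockNum, sum_mul, Ico_self, prod_empty, mul_one]
  congr 1
  refine sum_congr rfl fun j hj => ?_
  rw [prod_Ico_succ_top (mem_Ico.1 hj).2 q, mul_assoc]

theorem one_le_blockDen (hq : ∀ j, 0 < q j) : 1 ≤ blockDen q a b :=
  one_le_prod' fun j _ => hq j

theorem two_le_blockDen (hq : ∀ j, 2 ≤ q j) (hab : a < b) : 2 ≤ blockDen q a b :=
  (hq a).trans <| single_le_prod' (fun j _ => (hq j).trans' one_le_two) (left_mem_Ico.2 hab)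

theorem mul_blockDen {R : Type*} [CommSemiring R] {ρ : ℕ → R}
    (hρ : ∀ n, (q n : R) * ρ n = ε n + ρ (n + 1)) (hab : a ≤ b) :
    ρ a * blockDen q a b = blockNum q ε a b + ρ b := by
  induction b, hab using Nat.le_induction with
  | base => simp [blockDen, blockNum]
  | succ b hab ih =>
    rw [blockDen_succ hab, blockNum_succ hab]
    push_cast
    calc ρ a * (blockDen q a b * q b) = (ρ a * blockDen q a b) * q b := by ring
      _ = blockNum q ε a b * q b + q b * ρ b := by rw [ih]; ring
      _ = blockNum q ε a b * q b + ε b + ρ (b + 1) := by rw [hρ b, add_assoc]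

end Blocks

section Tails

variable {ρ : ℕ → ℝ} (hρ : ∀ n, (q n : ℝ) * ρ n = ε n + ρ (n + 1))
include hρ

theorem exists_rat_eq_of_eq_rat (hq : ∀ j, 0 < q j) {n : ℕ} {c : ℚ} (hn : ρ n = c) :
    ∃ r : ℚ, ρ 0 = r := by
  have hD : (0 : ℝ) < blockDen q 0 n := by exact_mod_cast one_le_blockDen hq
  refine ⟨(blockNum q ε 0 n + c) / blockDen q 0 n, ?_⟩
  push_cast
  rw [eq_div_iff hD.ne', mul_blockDen hρ (Nat.zero_le n), hn]

theorem sub_mul_blockDen_eq (hq : ∀ j, 0 < q j) {a b h k : ℕ} (hk : 0 < k) (hab : a ≤ b)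
    (hblock : k * blockNum q ε a b = h * (blockDen q a b - 1)) :
    (ρ a - h / k) * blockDen q a b = ρ b - h / k := by
  have hA := (mul_eq_mul_sub_one_iff hk (one_le_blockDen hq)).1 hblock
  linear_combination mul_blockDen hρ hab - hA

variable (hbound : ∀ n, ρ n ∈ Set.Icc 0 1)
include hbound

theorem exists_infinite_setOf_eq_rat {r : ℚ} (h0 : ρ 0 = r) :
    ∃ c : ℚ, {n | ρ n = c}.Infinite := by
  have hd : (0 : ℝ) < r.den := by exact_mod_cast r.pos
  set z : ℕ → ℤ := fun n => r.num * blockDen q 0 n - blockNum q ε 0 n * r.den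
  have hz : ∀ n, ρ n * r.den = z n := by
    intro n
    have hblock := mul_blockDen hρ (Nat.zero_le n)
    have hnum : (r.num : ℝ) = r * r.den := by exact_mod_cast (Rat.mul_den_eq_num r).symm
    rw [h0] at hblock
    push_cast [z, hnum]
    linear_combination (-(r.den : ℝ)) * hblock
  have hrange : Set.range z ⊆ Set.Icc 0 r.den := by
    rintro _ ⟨n, rfl⟩
    have h1 : (0 : ℝ) ≤ z n := hz n ▸ mul_nonneg (hbound n).1 hd.le
    have h2 : (z n : ℝ) ≤ r.den := hz n ▸ mul_le_of_le_one_left hd.le (hbound n).2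
    exact ⟨by exact_mod_cast h1, by exact_mod_cast h2⟩
  obtain ⟨y, hy⟩ := exists_infinite_fiber_of_finite_range ((Set.finite_Icc _ _).subset hrange)
  refine ⟨y / r.den, hy.mono fun n hn => ?_⟩
  show ρ n = ((y / r.den : ℚ) : ℝ)
  push_cast
  rw [eq_div_iff hd.ne', hz n, (hn : z n = y)]

theorem condensationCriterion_of_eq_rat (hq : ∀ j, 0 < q j) {r : ℚ} (h0 : ρ 0 = r) :
    CondensationCriterion q ε := by
  obtain ⟨c, hc⟩ := exists_infinite_setOf_eq_rat hρ hbound h0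
  obtain ⟨n, hn : ρ n = c⟩ := hc.nonempty
  have hc0 : 0 ≤ c := by exact_mod_cast hn ▸ (hbound n).1
  have hc1 : c ≤ 1 := by exact_mod_cast hn ▸ (hbound n).2
  obtain ⟨h, k, hcop, hhk, hck⟩ := Rat.exists_coprime_le_eq_div hc0 hc1
  obtain ⟨m, hm0, hm, hmc⟩ := hc.exists_strictMono_from_zero
  refine ⟨h, k, hcop, hhk, 2, two_pos, m, hm0, hm, fun i hi => ?_⟩
  rw [mul_eq_mul_sub_one_iff (hcop.pos_right_of_le hhk) (one_le_blockDen hq)]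
  have hblock := mul_blockDen hρ (hm.monotone (Nat.sub_le i 1))
  rw [(hmc (i - 1) (by omega) : ρ _ = c), (hmc i (by omega) : ρ _ = c), hck] at hblock
  push_cast at hblock
  exact hblock

theorem exists_rat_eq_of_condensationCriterion (hq : ∀ j, 2 ≤ q j)
    (hC : CondensationCriterion q ε) : ∃ r : ℚ, ρ 0 = r := by
  obtain ⟨h, k, hcop, hhk, N, -, m, -, hm, hcond⟩ := hC
  have hk := hcop.pos_right_of_le hhk
  have hq0 : ∀ j, 0 < q j := fun j => zero_lt_two.trans_le (hq j)
  have hc : (h / k : ℝ) ∈ Set.Icc 0 1 :=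
    ⟨by positivity, div_le_one_of_le₀ (by exact_mod_cast hhk) (by positivity)⟩
  have hzero := eq_zero_of_abs_le_of_two_mul_abs_le
    (u := fun j => ρ (m (N - 1 + j)) - h / k) (C := 1)
    (fun j => Real.dist_eq _ _ ▸ Real.dist_le_of_mem_Icc_01 (hbound _) hc)
    (fun j => by
      have hcondj := hcond (N - 1 + j + 1) (by omega)
      rw [Nat.add_sub_cancel] at hcondj
      have hstep := sub_mul_blockDen_eq hρ hq0 hk (hm (N - 1 + j).lt_succ_self).le hcondj
      have hB := two_le_blockDen hq (hm (N - 1 + j).lt_succ_self)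
      show 2 * |ρ (m (N - 1 + j)) - h / k| ≤ |ρ (m (N - 1 + j + 1)) - h / k|
      rw [← hstep, abs_mul, Nat.abs_cast, mul_comm]
      gcongr
      exact_mod_cast hB)
  rw [add_zero, sub_eq_zero] at hzero
  exact exists_rat_eq_of_eq_rat hρ hq0 (c := h / k) (by push_cast; exact hzero)

end Tails

end CantorSeries

theorem cantor_rational_iff_condensation_general
    (q ε : ℕ → ℕ) (hq : ∀ k, 2 ≤ q k) (hε : ∀ k, ε k < q k)
    (x : ℝ)
    (hx : x = ∑' k : ℕ, (ε k : ℝ) / ∏ i ∈ Finset.range (k + 1), (q i : ℝ)) :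
    (∃ r : ℚ, x = (r : ℝ)) ↔
      ∃ h k : ℕ, Nat.Coprime h k ∧ h ≤ k ∧
        ∃ N : ℕ, 0 < N ∧ ∃ m : ℕ → ℕ, m 0 = 0 ∧ StrictMono m ∧
          ∀ i ≥ N, k * (∑ j ∈ Finset.Ico (m (i - 1)) (m i),
              ε j * ∏ l ∈ Finset.Ico (j + 1) (m i), q l) =
            h * ((∏ j ∈ Finset.Ico (m (i - 1)) (m i), q j) - 1) := by
  have hx0 : x = CantorSeries.tail q ε 0 := hx.trans CantorSeries.tail_zero.symm
  have hρ := CantorSeries.q_mul_tail hε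
  have hbound := CantorSeries.tail_mem_Icc hε
  subst hx0
  exact ⟨fun ⟨_, hr⟩ => CantorSeries.condensationCriterion_of_eq_rat hρ hbound
      (fun j => (hε j).pos) hr,
    CantorSeries.exists_rat_eq_of_condensationCriterion hρ hbound hq⟩

/-- (Diananda–Oppenheim) A number `x ∈ [0,1]` represented by the Cantor
series `x = ∑ ε_k / (q_1 ⋯ q_k)` is rational iff there are coprime integers `0 ≤ h ≤ k`,
a positive integer `N`, and a condensation `0 = m_0 < m_1 < m_2 < ⋯` such that, with
`B_i = q_{m_{i−1}+1} ⋯ q_{m_i}` and `A_i = ∑_{j=m_{i−1}+1}^{m_i} ε_j (q_{j+1} ⋯ q_{m_i})`,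
one has `k ⬝ A_i = h ⬝ (B_i − 1)` for all `i ≥ N`. (Sequences are 0-indexed, so
`B_i = ∏_{j ∈ [m_{i−1}, m_i)} q j` and `A_i = ∑_{j ∈ [m_{i−1}, m_i)} ε j ∏_{l ∈ [j+1, m_i)} q l`.) -/
theorem cantor_rational_iff_condensation
    (q ε : ℕ → ℕ) (hq : ∀ k, 2 ≤ q k) (hε : ∀ k, ε k < q k)
    (x : ℝ) (hmem : x ∈ Set.Icc (0 : ℝ) 1)
    (hx : x = ∑' k : ℕ, (ε k : ℝ) / ∏ i ∈ Finset.range (k + 1), (q i : ℝ)) :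
    (∃ r : ℚ, x = (r : ℝ)) ↔
      ∃ h k : ℕ, Nat.Coprime h k ∧ h ≤ k ∧
        ∃ N : ℕ, 0 < N ∧ ∃ m : ℕ → ℕ, m 0 = 0 ∧ StrictMono m ∧
          ∀ i ≥ N, k * (∑ j ∈ Finset.Ico (m (i - 1)) (m i),
              ε j * ∏ l ∈ Finset.Ico (j + 1) (m i), q l) =
            h * ((∏ j ∈ Finset.Ico (m (i - 1)) (m i), q j) - 1) :=
  cantor_rational_iff_condensation_general q ε hq hε x hx
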